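/- Parity of homogeneous Casimirs of the sp(2,ℝ) Lie–Poisson structure: on MvPolynomial (Fin 3) ℝ with variables x = X 0, y = X 1, z = X 2, define the bracket {f, g} := z·(∂_x f·∂_y g − ∂_y f·∂_x g) + 2x·(∂_z f·∂_x g − ∂_x f·∂_z g) − 2y·(∂_z f·∂_y g − ∂_y f·∂_z g), where ∂_i = pderiv i. For w : ℕ, the ℝ-dimension of the space { f ∈ homogeneousSubmodule (Fin 3) ℝ w | {f, g} = 0 for all g } equals 1 if w is even and 0 if w is odd. -/

import Mathlib

open MvPolynomial

/-- The Lie–Poisson bracket of `sp(ℝ²) ≅ sl(2,ℝ)` on `ℝ³` with coordinates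
`x = X 0`, `y = X 1`, `z = X 2`:
`{f, g} = z(∂ₓf ∂_yg − ∂_yf ∂ₓg) + 2x(∂_zf ∂ₓg − ∂ₓf ∂_zg) − 2y(∂_zf ∂_yg − ∂_yf ∂_zg)`. -/
noncomputable def spBracket (f g : MvPolynomial (Fin 3) ℝ) : MvPolynomial (Fin 3) ℝ :=
  X 2 * (pderiv 0 f * pderiv 1 g - pderiv 1 f * pderiv 0 g)
    + 2 * X 0 * (pderiv 2 f * pderiv 0 g - pderiv 0 f * pderiv 2 g)
    - 2 * X 1 * (pderiv 2 f * pderiv 1 g - pderiv 1 f * pderiv 2 g)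

/-- The space of homogeneous degree-`w` Casimir polynomials of the `sp(ℝ²)`
Lie–Poisson structure: `{ f ∈ homogeneousSubmodule w | ∀ g, {f,g} = 0 }`. -/
noncomputable def spCasimir (w : ℕ) : Submodule ℝ (MvPolynomial (Fin 3) ℝ) where
  carrier := {f | f ∈ homogeneousSubmodule (Fin 3) ℝ w ∧ ∀ g, spBracket f g = 0}
  zero_mem' := ⟨Submodule.zero_mem _, fun g => by simp [spBracket]⟩
  add_mem' := by
    rintro a b ⟨ha1, ha2⟩ ⟨hb1, hb2⟩
    refine ⟨Submodule.add_mem _ ha1 hb1, fun g => ?_⟩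
    have h1 := ha2 g
    have h2 := hb2 g
    simp only [spBracket, map_add] at h1 h2 ⊢
    linear_combination h1 + h2
  smul_mem' := by
    rintro c a ⟨ha1, ha2⟩
    refine ⟨Submodule.smul_mem _ c ha1, fun g => ?_⟩
    have h := ha2 g
    simp only [spBracket]
    simp only [Derivation.map_smul]
    simp only [smul_eq_C_mul]
    simp only [spBracket] at h
    linear_combination (C c : MvPolynomial (Fin 3) ℝ) * h

/-!
For a Casimir `f`, the equation `{f, z} = 0` reads `x ∂ₓf = y ∂_yf`, so only monomials
`xⁿ yⁿ zᵏ` occur in `f`, and `{f, x} = 0` reads `2x ∂_zf = z ∂_yf`. Comparing coefficients in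
the latter kills the `z¹` terms and expresses the coefficient of `xⁿ yⁿ zᵏ⁺²` through that of
`xⁿ⁺¹ yⁿ⁺¹ zᵏ`, so a homogeneous Casimir of degree `w` is determined by its coefficient of
`(xy)^(w/2)`, which can only be nonzero for even `w`. For `w = 2n` the power `(z² + 4xy)ⁿ` of the
quadratic Casimir is a nonzero Casimir.
-/

theorem MvPolynomial.coeff_X_mul_pderiv {σ R : Type*} [CommSemiring R] (i : σ)
    (f : MvPolynomial σ R) (m : σ →₀ ℕ) : coeff m (X i * pderiv i f) = m i * coeff m f := by
  classical
  rw [coeff_X_mul']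
  split_ifs with hi
  · have hle : Finsupp.single i 1 ≤ m :=
      Finsupp.single_le_iff.2 (Nat.one_le_iff_ne_zero.2 (Finsupp.mem_support_iff.1 hi))
    have hmi : (m - Finsupp.single i 1 : σ →₀ ℕ) i + 1 = m i := by
      simpa using DFunLike.congr_fun (tsub_add_cancel_of_le hle) i
    rw [coeff_pderiv, tsub_add_cancel_of_le hle, ← hmi]
    push_cast
    ring
  · simp [Finsupp.notMem_support_iff.1 hi]

theorem Finsupp.exists_eq_add_single_of_le {σ : Type*} {m : σ →₀ ℕ} {i : σ} {n : ℕ}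
    (h : n ≤ m i) : ∃ m', m = m' + Finsupp.single i n ∧ m' i = m i - n :=
  ⟨m - Finsupp.single i n, (tsub_add_cancel_of_le (Finsupp.single_le_iff.2 h)).symm, by simp⟩

theorem Module.finrank_eq_one_of_injective {K V : Type*} [DivisionRing K] [AddCommGroup V]
    [Module K V] {φ : V →ₗ[K] K} (hφ : Function.Injective φ) {v : V} (hv : v ≠ 0) :
    Module.finrank K V = 1 := by
  have := Module.Finite.of_injective φ hφ
  refine le_antisymm ?_ (Module.finrank_pos_iff_exists_ne_zero.2 ⟨v, hv⟩)
  simpa using LinearMap.finrank_le_finrank_of_injective hφ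

theorem spBracket_X_zero (f : MvPolynomial (Fin 3) ℝ) :
    spBracket f (X 0) = 2 * X 0 * pderiv 2 f - X 2 * pderiv 1 f := by
  simp only [spBracket, pderiv_X_self, pderiv_X_of_ne (show (0 : Fin 3) ≠ 1 by decide),
    pderiv_X_of_ne (show (0 : Fin 3) ≠ 2 by decide)]
  ring

theorem spBracket_X_two (f : MvPolynomial (Fin 3) ℝ) :
    spBracket f (X 2) = 2 * (X 1 * pderiv 1 f - X 0 * pderiv 0 f) := by
  simp only [spBracket, pderiv_X_self, pderiv_X_of_ne (show (2 : Fin 3) ≠ 0 by decide),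
    pderiv_X_of_ne (show (2 : Fin 3) ≠ 1 by decide)]
  ring

theorem spBracket_pow_left (a g : MvPolynomial (Fin 3) ℝ) (n : ℕ) :
    spBracket (a ^ n) g = n * a ^ (n - 1) * spBracket a g := by
  simp only [spBracket, pderiv_pow]
  ring

noncomputable def spQuadCasimir : MvPolynomial (Fin 3) ℝ := X 2 ^ 2 + 4 * X 0 * X 1

theorem spBracket_spQuadCasimir (g : MvPolynomial (Fin 3) ℝ) :
    spBracket spQuadCasimir g = 0 := by
  have h4 (i : Fin 3) : pderiv i (4 : MvPolynomial (Fin 3) ℝ) = 0 := (pderiv i).map_natCast 4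
  have h0 : pderiv 0 spQuadCasimir = 4 * X 1 := by
    simp [spQuadCasimir, pderiv_X, h4, mul_comm]
  have h1 : pderiv 1 spQuadCasimir = 4 * X 0 := by
    simp [spQuadCasimir, pderiv_X, h4, mul_comm]
  have h2 : pderiv 2 spQuadCasimir = 2 * X 2 := by
    simp [spQuadCasimir, pderiv_X, h4, mul_comm]
  rw [spBracket, h0, h1, h2]
  ring

theorem isHomogeneous_spQuadCasimir : spQuadCasimir.IsHomogeneous 2 := by
  rw [spQuadCasimir, ← map_ofNat C 4]
  exact (isHomogeneous_X_pow 2 2).add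
    (((isHomogeneous_C _ _).mul (isHomogeneous_X _ 0)).mul (isHomogeneous_X _ 1))

theorem spQuadCasimir_ne_zero : spQuadCasimir ≠ 0 := by
  intro h
  simpa [spQuadCasimir] using congrArg (eval ![0, 0, 1]) h

theorem spQuadCasimir_pow_mem_spCasimir (n : ℕ) : spQuadCasimir ^ n ∈ spCasimir (n + n) := by
  refine ⟨?_, fun g => ?_⟩
  · rw [mem_homogeneousSubmodule, ← two_mul]
    exact isHomogeneous_spQuadCasimir.pow n
  · rw [spBracket_pow_left, spBracket_spQuadCasimir, mul_zero]

section Uniqueness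

variable {f : MvPolynomial (Fin 3) ℝ}

theorem coeff_eq_zero_of_spBracket_X_two_eq_zero (hf : spBracket f (X 2) = 0)
    {m : Fin 3 →₀ ℕ} (hm : m 0 ≠ m 1) : coeff m f = 0 := by
  rw [spBracket_X_two, mul_eq_zero, sub_eq_zero] at hf
  have h := congrArg (coeff m) (hf.resolve_left two_ne_zero)
  rw [coeff_X_mul_pderiv, coeff_X_mul_pderiv] at h
  have h' : ((m 1 : ℝ) - m 0) * coeff m f = 0 := by linear_combination h
  exact (mul_eq_zero.1 h').resolve_left (sub_ne_zero.2 (by exact_mod_cast hm.symm))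

theorem coeff_add_single_two_one_eq_zero (hf : spBracket f (X 0) = 0) {m : Fin 3 →₀ ℕ}
    (hm : m 2 = 0) : coeff (m + Finsupp.single 2 1) f = 0 := by
  rw [spBracket_X_zero, sub_eq_zero, ← map_ofNat C 2, mul_assoc] at hf
  have h := congrArg (coeff (Finsupp.single 0 1 + m)) hf
  rw [coeff_C_mul, coeff_X_mul, coeff_pderiv, coeff_X_mul', if_neg (by simp [hm])] at h
  simpa [hm] using h

theorem coeff_add_single_two_two_mul (hf : spBracket f (X 0) = 0) (m : Fin 3 →₀ ℕ) :
    coeff (m + Finsupp.single 2 2) f * (2 * (m 2 + 2)) =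
      coeff (m + Finsupp.single 0 1 + Finsupp.single 1 1) f * (m 1 + 1) := by
  rw [spBracket_X_zero, sub_eq_zero, ← map_ofNat C 2, mul_assoc] at hf
  have h := congrArg (coeff (Finsupp.single 0 1 + (Finsupp.single 2 1 + m))) hf
  rw [coeff_C_mul, coeff_X_mul, coeff_pderiv, add_left_comm, coeff_X_mul, coeff_pderiv,
    add_comm (Finsupp.single 0 1) m, add_right_comm, ← Finsupp.single_add, add_comm] at h
  simp only [Nat.reduceAdd, Finsupp.coe_add, Pi.add_apply, Finsupp.single_eq_same, Nat.cast_add,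
    Nat.cast_one, Finsupp.single_eq_of_ne (show (1 : Fin 3) ≠ 0 by decide), add_zero] at h
  linear_combination h

theorem eq_zero_of_spBracket_X_zero_eq_zero (hf : spBracket f (X 0) = 0)
    (h0 : ∀ m : Fin 3 →₀ ℕ, m 2 = 0 → coeff m f = 0) : f = 0 := by
  suffices ∀ k, ∀ m : Fin 3 →₀ ℕ, m 2 = k → coeff m f = 0 from
    eq_zero_iff.2 fun m => this _ m rfl
  intro k
  induction k using Nat.twoStepInduction with
  | zero => exact h0
  | one =>
    intro m hm
    obtain ⟨m', rfl, hm'⟩ := Finsupp.exists_eq_add_single_of_le hm.ge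
    exact coeff_add_single_two_one_eq_zero hf (by omega)
  | more k ih _ =>
    intro m hm
    obtain ⟨m', rfl, hm'⟩ := Finsupp.exists_eq_add_single_of_le (show 2 ≤ m 2 by omega)
    have h := coeff_add_single_two_two_mul hf m'
    rw [ih (m' + Finsupp.single 0 1 + Finsupp.single 1 1) (by simp; omega), zero_mul] at h
    exact (mul_eq_zero.1 h).resolve_right (by positivity)

theorem eq_zero_of_mem_spCasimir {w : ℕ} (hf : f ∈ spCasimir w)
    (hcoeff : coeff (Finsupp.single 0 (w / 2) + Finsupp.single 1 (w / 2)) f = 0) : f = 0 := by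
  obtain ⟨hhom, hbr⟩ := hf
  refine eq_zero_of_spBracket_X_zero_eq_zero (hbr _) fun m hm2 => ?_
  by_contra hm
  have h01 : m 0 = m 1 := by
    by_contra h
    exact hm (coeff_eq_zero_of_spBracket_X_two_eq_zero (hbr _) h)
  have hdeg : m 0 + m 1 + m 2 = w := by
    by_contra h
    refine hm (((mem_homogeneousSubmodule _ _).1 hhom).coeff_eq_zero ?_)
    rwa [Finsupp.degree_eq_sum, Fin.sum_univ_three]
  have hμ : m = Finsupp.single 0 (w / 2) + Finsupp.single 1 (w / 2) := by
    ext i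
    fin_cases i <;> simp <;> omega
  exact hm (hμ ▸ hcoeff)

end Uniqueness

/-- **Parity of homogeneous Casimirs of the `sp(2,ℝ)` Lie–Poisson structure.**
For every `w : ℕ`, the space of degree-`w` homogeneous Casimir polynomials has
dimension `1` if `w` is even and `0` if `w` is odd. -/
theorem finrank_spCasimir (w : ℕ) :
    Module.finrank ℝ (spCasimir w) = if Even w then 1 else 0 := by
  set μ : Fin 3 →₀ ℕ := Finsupp.single 0 (w / 2) + Finsupp.single 1 (w / 2)
  have hinj : Function.Injective ((lcoeff ℝ μ).comp (spCasimir w).subtype) := by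
    rw [← LinearMap.ker_eq_bot, LinearMap.ker_eq_bot']
    exact fun f hf => Subtype.ext (eq_zero_of_mem_spCasimir f.2 hf)
  split_ifs with hw
  · obtain ⟨n, rfl⟩ := hw
    refine Module.finrank_eq_one_of_injective hinj
      (v := ⟨_, spQuadCasimir_pow_mem_spCasimir n⟩) ?_
    simpa using pow_ne_zero n spQuadCasimir_ne_zero
  · rw [Nat.not_even_iff] at hw
    have hbot : spCasimir w = ⊥ := by
      refine eq_bot_iff.2 fun f hf => eq_zero_of_mem_spCasimir hf ?_
      refine ((mem_homogeneousSubmodule _ _).1 hf.1).coeff_eq_zero ?_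
      simp [Finsupp.degree_eq_sum, Fin.sum_univ_three]
      omega
    rw [hbot, finrank_bot]
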